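/- arXiv:1511.01076 — 4 statements merged into one kernel-verified Lean document; each statement's English description precedes it below -/
import Mathlib

section
/- Let π be a permutation of {1,...,n} avoiding both ⊕^k(k...21) and ⊖^k(12...k). Let 𝕽_π be the set of all axis-parallel rectangles R such that the subpermutation of π induced by the points of π inside R contains both the pattern k...21 and the pattern 12...k. Then the independence number of 𝕽_π is at most (k-1)². -/
/-!
Independent rectangles have pairwise distinct left edges and pairwise distinct bottom edges, so by
Erdős–Szekeres (labelling each rectangle by its heights in the two dominance orders of the
lower-left corners) any `(k-1)² + 1` of them contain `k` rectangles whose lower-left corners go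
right and either up or down. Independence makes such a chain separated in both coordinates;
concatenating the `k...21` patterns of an upward chain gives `⊕^k(k...21)`, and the `12...k`
patterns of a downward chain give `⊖^k(12...k)`.
-/

/-- A closed axis-parallel rectangle `[x1, x2] × [y1, y2]`. -/
structure Rect where
  x1 : ℝ
  x2 : ℝ
  y1 : ℝ
  y2 : ℝ
  hx : x1 ≤ x2
  hy : y1 ≤ y2

/-- Two rectangles are independent if both their x-projections and their
y-projections are disjoint. -/
def Rect.Indep (R S : Rect) : Prop :=
  (R.x2 < S.x1 ∨ S.x2 < R.x1) ∧ (R.y2 < S.y1 ∨ S.y2 < R.y1)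

/-- Membership of a point of the plane in a rectangle. -/
def Rect.Mem (R : Rect) (p : ℝ × ℝ) : Prop :=
  R.x1 ≤ p.1 ∧ p.1 ≤ R.x2 ∧ R.y1 ≤ p.2 ∧ p.2 ≤ R.y2

/-- The point of the plot of `π` at index `i` (0-indexed). -/
def plotPt {n : ℕ} (π : Equiv.Perm (Fin n)) (i : Fin n) : ℝ × ℝ :=
  (((i : ℕ) : ℝ), (((π i : Fin n) : ℕ) : ℝ))

/-- `π` contains the decreasing pattern `k...21` with all of its points lying
inside the rectangle `R`. -/
def ContainsDecInRect {n : ℕ} (k : ℕ) (π : Equiv.Perm (Fin n)) (R : Rect) : Prop :=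
  ∃ f : Fin k → Fin n, StrictMono f ∧ StrictAnti (fun i => π (f i)) ∧
    ∀ i, R.Mem (plotPt π (f i))

/-- `π` contains the increasing pattern `12...k` with all of its points lying
inside the rectangle `R`. -/
def ContainsIncInRect {n : ℕ} (k : ℕ) (π : Equiv.Perm (Fin n)) (R : Rect) : Prop :=
  ∃ f : Fin k → Fin n, StrictMono f ∧ StrictMono (fun i => π (f i)) ∧
    ∀ i, R.Mem (plotPt π (f i))

/-- `π` contains the pattern given (in one-line, 0-indexed form) by
`p : Fin m → ℕ`. -/
def ContainsPattern {n m : ℕ} (p : Fin m → ℕ) (π : Equiv.Perm (Fin n)) : Prop :=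
  ∃ f : Fin m → Fin n, StrictMono f ∧ ∀ i j, p i < p j ↔ π (f i) < π (f j)

/-- The layered permutation `⊕^k(k...21)` of length `k²` (0-indexed). -/
def LayeredFun (k : ℕ) (i : Fin (k * k)) : ℕ :=
  k * ((i : ℕ) / k) + (k - 1 - (i : ℕ) % k)

/-- The colayered permutation `⊖^k(12...k)` of length `k²` (0-indexed). -/
def ColayeredFun (k : ℕ) (i : Fin (k * k)) : ℕ :=
  k * (k - 1 - (i : ℕ) / k) + (i : ℕ) % k

open Function OrderDual Order

theorem exists_strictMono_fin_of_forall_not_strictMono {P : Type*} [Preorder P] {r : ℕ}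
    (h : ∀ e : Fin (r + 1) → P, ¬StrictMono e) : ∃ ℓ : P → Fin r, StrictMono ℓ := by
  have hlt : ∀ x : P, height x < r := fun x => lt_of_not_ge fun hx => by
    obtain ⟨p, -, rfl⟩ := exists_series_of_le_height x hx
    exact h p p.strictMono
  have hfin : ∀ x : P, ∃ a : Fin r, height x = (a : ℕ) := fun x => by
    have hx := hlt x
    lift height x to ℕ using hx.ne_top with a
    exact ⟨⟨a, by exact_mod_cast hx⟩, rfl⟩
  choose ℓ hℓ using hfin
  refine ⟨ℓ, fun x y hxy => ?_⟩
  have := height_strictMono hxy ((hlt x).trans (ENat.natCast_lt_top r))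
  rw [hℓ, hℓ] at this
  exact_mod_cast this

section Dominance

variable {ι α β : Type*}

/-- `ι` ordered by `i ≤ j ↔ f i ≤ f j ∧ g i ≤ g j`. -/
def Dominance (_f : ι → α) (_g : ι → β) : Type _ := ι

instance [Preorder α] [Preorder β] (f : ι → α) (g : ι → β) : Preorder (Dominance f g) :=
  Preorder.lift fun i : ι => (f i, g i)

variable [LinearOrder α] [LinearOrder β] {f : ι → α} {g : ι → β}

theorem Dominance.lt_iff (hf : Injective f) (hg : Injective g) {i j : Dominance f g} :
    i < j ↔ f i < f j ∧ g i < g j := by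
  change (f i, g i) < (f j, g j) ↔ _
  rcases eq_or_ne i j with rfl | hij
  · simp
  · simp only [Prod.lt_iff, (hf.ne hij).le_iff_lt, (hg.ne hij).le_iff_lt]
    tauto

theorem Dominance.strictMono_iff (hf : Injective f) (hg : Injective g) {γ : Type*} [Preorder γ]
    {e : γ → Dominance f g} : StrictMono e ↔ StrictMono (f ∘ e) ∧ StrictMono (g ∘ e) := by
  simp only [StrictMono, Dominance.lt_iff hf hg]
  exact ⟨fun he => ⟨fun a b hab => (he hab).1, fun a b hab => (he hab).2⟩,
    fun he a b hab => ⟨he.1 hab, he.2 hab⟩⟩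

end Dominance

theorem exists_strictMono_comp_and_strictMono_or_strictAnti {ι α β : Type*} [Fintype ι]
    [LinearOrder α] [LinearOrder β] {f : ι → α} {g : ι → β} (hf : Injective f) (hg : Injective g)
    {r s : ℕ} (h : r * s < Fintype.card ι) :
    (∃ e : Fin (r + 1) → ι, StrictMono (f ∘ e) ∧ StrictMono (g ∘ e)) ∨
      ∃ e : Fin (s + 1) → ι, StrictMono (f ∘ e) ∧ StrictAnti (g ∘ e) := by
  contrapose! h
  have hg' : Injective (toDual ∘ g) := toDual.injective.comp hg
  obtain ⟨ℓ₁, hℓ₁⟩ := exists_strictMono_fin_of_forall_not_strictMono (P := Dominance f g)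
    fun e he => ((Dominance.strictMono_iff hf hg).1 he).elim (h.1 e)
  obtain ⟨ℓ₂, hℓ₂⟩ :=
    exists_strictMono_fin_of_forall_not_strictMono (P := Dominance f (toDual ∘ g)) fun e he =>
      ((Dominance.strictMono_iff hf hg').1 he).elim fun hfe hge =>
        h.2 e hfe (strictMono_toDual_comp_iff.1 hge)
  -- two distinct indices are comparable in one of the two dominance orders
  have hne : ∀ i j, f i < f j → (ℓ₁ i, ℓ₂ i) ≠ (ℓ₁ j, ℓ₂ j) := fun i j hfij heq => by
    rcases (hg.ne (hf.ne_iff.1 hfij.ne)).lt_or_gt with hgij | hgij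
    · exact (hℓ₁ ((Dominance.lt_iff hf hg).2 ⟨hfij, hgij⟩)).ne (congrArg Prod.fst heq)
    · exact (hℓ₂ ((Dominance.lt_iff hf hg').2 ⟨hfij, toDual_lt_toDual.2 hgij⟩)).ne
        (congrArg Prod.snd heq)
  have hinj : Injective fun i : ι => (ℓ₁ i, ℓ₂ i) := fun i j hij => by
    by_contra hij'
    rcases (hf.ne hij').lt_or_gt with hfij | hfij
    exacts [hne i j hfij hij, hne j i hfij hij.symm]
  simpa using Fintype.card_le_of_injective _ hinj

theorem strictMono_uncurry_toLex {α β γ : Type*} [Preorder α] [Preorder β] [Preorder γ]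
    {φ : α → β → γ} (hsep : ∀ a b, a < b → ∀ x y, φ a x < φ b y) (hrow : ∀ a, StrictMono (φ a)) :
    StrictMono fun p : α ×ₗ β => φ (ofLex p).1 (ofLex p).2 := by
  rintro ⟨a, x⟩ ⟨b, y⟩ hlt
  rcases Prod.Lex.lt_iff.1 hlt with hab | ⟨rfl, hxy⟩
  exacts [hsep a b hab x y, hrow a hxy]

theorem finProdFinEquiv_lt_finProdFinEquiv {m n : ℕ} {p q : Fin m × Fin n} :
    finProdFinEquiv p < finProdFinEquiv q ↔ toLex p < toLex q := by
  have hmono : StrictMono fun p : Fin m ×ₗ Fin n => finProdFinEquiv (ofLex p) := by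
    refine strictMono_uncurry_toLex (φ := fun a x => finProdFinEquiv (a, x)) ?_ ?_
    · intro a b hab x y
      rw [Fin.lt_def] at hab ⊢
      simp only [finProdFinEquiv_apply_val]
      nlinarith [x.isLt, y.isLt]
    · intro a x y hxy
      rw [Fin.lt_def] at hxy ⊢
      simp only [finProdFinEquiv_apply_val]
      omega
  exact hmono.lt_iff_lt (a := toLex p) (b := toLex q)

theorem Fin.lt_iff_toLex_divNat_modNat {m n : ℕ} {i j : Fin (m * n)} :
    i < j ↔ toLex (i.divNat, i.modNat) < toLex (j.divNat, j.modNat) := by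
  conv_lhs => rw [← finProdFinEquiv.apply_symm_apply i, ← finProdFinEquiv.apply_symm_apply j]
  exact finProdFinEquiv_lt_finProdFinEquiv

theorem strictMono_concat {m n : ℕ} {γ : Type*} [Preorder γ] {f : Fin m → Fin n → γ}
    (hsep : ∀ a b, a < b → ∀ x y, f a x < f b y) (hrow : ∀ a, StrictMono (f a)) :
    StrictMono fun i : Fin (m * n) => f i.divNat i.modNat :=
  fun _ _ hij => strictMono_uncurry_toLex hsep hrow (Fin.lt_iff_toLex_divNat_modNat.1 hij)

theorem layeredFun_lt_layeredFun {k : ℕ} {i j : Fin (k * k)} :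
    LayeredFun k i < LayeredFun k j ↔
      toLex (i.divNat, i.modNat.rev) < toLex (j.divNat, j.modNat.rev) := by
  have (i : Fin (k * k)) : LayeredFun k i = finProdFinEquiv (i.divNat, i.modNat.rev) := by
    simp only [LayeredFun, finProdFinEquiv_apply_val, Fin.val_rev, Fin.coe_divNat, Fin.coe_modNat]
    omega
  rw [this, this, Fin.val_fin_lt, finProdFinEquiv_lt_finProdFinEquiv]

theorem colayeredFun_lt_colayeredFun {k : ℕ} {i j : Fin (k * k)} :
    ColayeredFun k i < ColayeredFun k j ↔
      toLex (i.divNat.rev, i.modNat) < toLex (j.divNat.rev, j.modNat) := by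
  have (i : Fin (k * k)) : ColayeredFun k i = finProdFinEquiv (i.divNat.rev, i.modNat) := by
    simp only [ColayeredFun, finProdFinEquiv_apply_val, Fin.val_rev, Fin.coe_divNat, Fin.coe_modNat,
      Nat.sub_sub, Nat.add_comm 1]
    omega
  rw [this, this, Fin.val_fin_lt, finProdFinEquiv_lt_finProdFinEquiv]

section Blocks

variable {k n : ℕ} {π : Equiv.Perm (Fin n)} {f : Fin k → Fin k → Fin n}

theorem containsPattern_layeredFun_of_blocks (hsep : ∀ a b, a < b → ∀ x y, f a x < f b y)
    (hrow : ∀ a, StrictMono (f a)) (hup : ∀ a b, a < b → ∀ x y, π (f a x) < π (f b y))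
    (hdown : ∀ a, StrictAnti fun x => π (f a x)) : ContainsPattern (LayeredFun k) π := by
  refine ⟨fun i => f i.divNat i.modNat, strictMono_concat hsep hrow, fun i j => ?_⟩
  have hval : StrictMono fun p : Fin k ×ₗ Fin k => π (f (ofLex p).1 (ofLex p).2.rev) :=
    strictMono_uncurry_toLex (φ := fun a x : Fin k => π (f a x.rev))
      (fun a b hab x y => hup a b hab _ _) fun a => (hdown a).comp Fin.rev_strictAnti
  rw [layeredFun_lt_layeredFun, ← hval.lt_iff_lt]
  simp

theorem containsPattern_colayeredFun_of_blocks (hsep : ∀ a b, a < b → ∀ x y, f a x < f b y)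
    (hrow : ∀ a, StrictMono (f a)) (hdown : ∀ a b, a < b → ∀ x y, π (f b y) < π (f a x))
    (hup : ∀ a, StrictMono fun x => π (f a x)) : ContainsPattern (ColayeredFun k) π := by
  refine ⟨fun i => f i.divNat i.modNat, strictMono_concat hsep hrow, fun i j => ?_⟩
  have hval : StrictMono fun p : Fin k ×ₗ Fin k => π (f (ofLex p).1.rev (ofLex p).2) :=
    strictMono_uncurry_toLex (φ := fun a x : Fin k => π (f a.rev x))
      (fun a b hab x y => hdown _ _ (Fin.rev_lt_rev.2 hab) _ _) fun a => hup a.rev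
  rw [colayeredFun_lt_colayeredFun, ← hval.lt_iff_lt]
  simp

end Blocks

namespace Rect

variable {R S : Rect}

theorem Indep.x1_ne (h : R.Indep S) : R.x1 ≠ S.x1 := by
  intro heq
  rcases h.1 with h' | h' <;> linarith [R.hx, S.hx]

theorem Indep.y1_ne (h : R.Indep S) : R.y1 ≠ S.y1 := by
  intro heq
  rcases h.2 with h' | h' <;> linarith [R.hy, S.hy]

theorem Indep.x2_lt_x1 (h : R.Indep S) (hlt : R.x1 < S.x1) : R.x2 < S.x1 :=
  h.1.resolve_right fun h' => by linarith [S.hx]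

theorem Indep.y2_lt_y1 (h : R.Indep S) (hlt : R.y1 < S.y1) : R.y2 < S.y1 :=
  h.2.resolve_right fun h' => by linarith [S.hy]

variable {n : ℕ} {π : Equiv.Perm (Fin n)} {i j : Fin n}

theorem Mem.lt_of_x2_lt_x1 (hi : R.Mem (plotPt π i)) (hj : S.Mem (plotPt π j))
    (h : R.x2 < S.x1) : i < j := by
  have : ((i : ℕ) : ℝ) < (j : ℕ) := hi.2.1.trans_lt (h.trans_le hj.1)
  exact_mod_cast this

theorem Mem.apply_lt_of_y2_lt_y1 (hi : R.Mem (plotPt π i)) (hj : S.Mem (plotPt π j))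
    (h : R.y2 < S.y1) : π i < π j := by
  have : ((π i : ℕ) : ℝ) < (π j : ℕ) := hi.2.2.2.trans_lt (h.trans_le hj.2.2.1)
  exact_mod_cast this

end Rect

section Chains

variable {n k : ℕ} {π : Equiv.Perm (Fin n)} {R : Fin k → Rect}

theorem containsPattern_layeredFun_of_chain (hx : ∀ a b, a < b → (R a).x2 < (R b).x1)
    (hy : ∀ a b, a < b → (R a).y2 < (R b).y1) (hdec : ∀ a, ContainsDecInRect k π (R a)) :
    ContainsPattern (LayeredFun k) π := by
  choose f hf hπf hmem using hdec
  exact containsPattern_layeredFun_of_blocks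
    (fun a b hab x y => (hmem a x).lt_of_x2_lt_x1 (hmem b y) (hx a b hab)) hf
    (fun a b hab x y => (hmem a x).apply_lt_of_y2_lt_y1 (hmem b y) (hy a b hab)) hπf

theorem containsPattern_colayeredFun_of_chain (hx : ∀ a b, a < b → (R a).x2 < (R b).x1)
    (hy : ∀ a b, a < b → (R b).y2 < (R a).y1) (hinc : ∀ a, ContainsIncInRect k π (R a)) :
    ContainsPattern (ColayeredFun k) π := by
  choose f hf hπf hmem using hinc
  exact containsPattern_colayeredFun_of_blocks
    (fun a b hab x y => (hmem a x).lt_of_x2_lt_x1 (hmem b y) (hx a b hab)) hf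
    (fun a b hab x y => (hmem b y).apply_lt_of_y2_lt_y1 (hmem a x) (hy a b hab)) hπf

end Chains

/-- If `π` avoids both `⊕^k(k...21)` and `⊖^k(12...k)`, then any pairwise
independent family of rectangles each of which contains both the pattern
`k...21` and the pattern `12...k` of `π` has size at most `(k-1)²`. -/
theorem independence_number_of_rich_rectangles (n k : ℕ) (π : Equiv.Perm (Fin n))
    (h₁ : ¬ ContainsPattern (LayeredFun k) π)
    (h₂ : ¬ ContainsPattern (ColayeredFun k) π)
    (m : ℕ) (R : Fin m → Rect)
    (hrich : ∀ a, ContainsDecInRect k π (R a) ∧ ContainsIncInRect k π (R a))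
    (hindep : ∀ a b, a ≠ b → Rect.Indep (R a) (R b)) :
    m ≤ (k - 1) ^ 2 := by
  obtain _ | r := k
  · exact (h₁ ⟨Fin.elim0, fun i => i.elim0, fun i => i.elim0⟩).elim
  by_contra! hm
  have hx : Injective fun a => (R a).x1 := fun a b hab =>
    by_contra fun hne => (hindep a b hne).x1_ne hab
  have hy : Injective fun a => (R a).y1 := fun a b hab =>
    by_contra fun hne => (hindep a b hne).y1_ne hab
  obtain ⟨e, hex, hey⟩ | ⟨e, hex, hey⟩ :=
    exists_strictMono_comp_and_strictMono_or_strictAnti hx hy (r := r) (s := r)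
      (by simpa [sq] using hm)
  all_goals
    have hind : ∀ a b, a ≠ b → (R (e a)).Indep (R (e b)) := fun a b hab =>
      hindep _ _ (hex.injective.of_comp.ne hab)
    have hsep : ∀ a b, a < b → (R (e a)).x2 < (R (e b)).x1 := fun a b hab =>
      (hind a b hab.ne).x2_lt_x1 (hex hab)
  · exact h₁ (containsPattern_layeredFun_of_chain hsep
      (fun a b hab => (hind a b hab.ne).y2_lt_y1 (hey hab)) fun a => (hrich (e a)).1)
  · exact h₂ (containsPattern_colayeredFun_of_chain hsep
      (fun a b hab => (hind b a hab.ne').y2_lt_y1 (hey hab)) fun a => (hrich (e a)).2)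
end

section
/- Every permutation of length n that avoids both ⊕^k(k...21) and ⊖^k(12...k) contains a monotone subsequence of length at least n/(8k³). -/
/-!
Let `μ` be the length of a longest monotone subsequence of `π`. Call `u` and `w` separated when
some decreasing run of `k` points lies north-east of `u` and south-west of `w`. A chain of `k + 1`
pairwise separated points produces `⊕^k(k...21)`, so by Mirsky's argument the height function of
separation takes at most `k` values. The complement of `π` turns `⊖^k(12...k)` into
`⊕^k(k...21)`, so the two height functions sort the points into `k²` classes, no two points of
which are separated in `π` or in its complement. Hence the rectangle spanned by two points of a
class contains no decreasing run of length `k` (resp. no increasing one), and by Erdős–Szekeres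
at most `(k - 1) μ` points. The leftmost, rightmost, highest and lowest points of a class span six
rectangles covering the rest of it, so each class has at most `4 + 6 (k - 1) μ` points and
`n ≤ k² (4 + 6 (k - 1) μ) ≤ 8 k³ μ`.
-/

open Finset OrderDual

section Mirsky

variable {α : Type*} {r : α → α → Prop}

theorem exists_height_of_isChain_card_le (htrans : ∀ ⦃x y z⦄, r x y → r y z → r x z)
    (hirr : ∀ x, ¬ r x x) (s : Finset α) {m : ℕ} (hs : ∀ t ⊆ s, IsChain r (t : Set α) → #t ≤ m) :
    ∃ h : α → ℕ, (∀ x ∈ s, h x ∈ Icc 1 m) ∧ ∀ x ∈ s, ∀ y ∈ s, r x y → h x < h y := by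
  classical
  let chainsTo (x : α) : Finset (Finset α) :=
    {t ∈ s.powerset | IsChain r (t : Set α) ∧ x ∈ t ∧ ∀ y ∈ t, y ≠ x → r y x}
  have singleton_mem (x : α) (hx : x ∈ s) : {x} ∈ chainsTo x := by
    simp [chainsTo, hx, Set.subsingleton_singleton.isChain]
  refine ⟨fun x => (chainsTo x).sup card, fun x hx => mem_Icc.2 ⟨?_, ?_⟩, ?_⟩
  · simpa using le_sup (f := card) (singleton_mem x hx)
  · refine Finset.sup_le fun t ht => ?_
    simp only [chainsTo, mem_filter, mem_powerset] at ht
    exact hs t ht.1 ht.2.1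
  · intro x hx y hy hxy
    obtain ⟨t, ht, hsup⟩ := exists_mem_eq_sup _ ⟨_, singleton_mem x hx⟩ card
    simp only [chainsTo, mem_filter, mem_powerset] at ht
    obtain ⟨hts, htc, -, htop⟩ := ht
    have below_y : ∀ z ∈ t, r z y := fun z hz =>
      if hzx : z = x then hzx ▸ hxy else htrans (htop z hz hzx) hxy
    have hyt : y ∉ t := fun hyt => hirr y (below_y y hyt)
    have hmem : insert y t ∈ chainsTo y := by
      simp only [chainsTo, mem_filter, mem_powerset, coe_insert]
      refine ⟨insert_subset hy hts, htc.insert fun z hz _ => Or.inr (below_y z hz),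
        mem_insert_self _ _, fun z hz hzy => below_y z ((mem_insert.1 hz).resolve_left hzy)⟩
    calc (chainsTo x).sup card = #t := hsup
      _ < #(insert y t) := by rw [card_insert_of_notMem hyt]; omega
      _ ≤ (chainsTo y).sup card := le_sup hmem

theorem card_le_mul_of_isChain_of_isAntichain (htrans : ∀ ⦃x y z⦄, r x y → r y z → r x z)
    (hirr : ∀ x, ¬ r x x) (s : Finset α) {m μ : ℕ} (hchain : ∀ t ⊆ s, IsChain r (t : Set α) → #t ≤ m)
    (hanti : ∀ t ⊆ s, IsAntichain r (t : Set α) → #t ≤ μ) : #s ≤ m * μ := by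
  classical
  obtain ⟨h, hrange, hstrict⟩ := exists_height_of_isChain_card_le htrans hirr s hchain
  calc #s ≤ μ * #(Icc 1 m) := card_le_mul_card_image_of_maps_to hrange μ fun c _ => by
        refine hanti _ (filter_subset _ _) fun x hx y hy _ hxy => ?_
        rw [mem_coe, mem_filter] at hx hy
        exact (hstrict x hx.1 y hy.1 hxy).ne (hx.2.trans hy.2.symm)
    _ = m * μ := by rw [Nat.card_Icc, Nat.add_sub_cancel, mul_comm]

end Mirsky

theorem card_le_mul_of_strictAntiOn_of_strictMonoOn {α β : Type*} [LinearOrder α]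
    [LinearOrder β] {f : α → β} {s : Finset α} (hf : Set.InjOn f s) {m μ : ℕ}
    (hanti : ∀ t ⊆ s, StrictAntiOn f (t : Set α) → #t ≤ m)
    (hmono : ∀ t ⊆ s, StrictMonoOn f (t : Set α) → #t ≤ μ) : #s ≤ m * μ := by
  refine card_le_mul_of_isChain_of_isAntichain (r := fun x y => x < y ∧ f y < f x)
    (fun x y z hxy hyz => ⟨hxy.1.trans hyz.1, hyz.2.trans hxy.2⟩) (fun x hx => hx.1.false) s
    (fun t hts ht => hanti t hts fun x hx y hy hxy => ?_)
    (fun t hts ht => hmono t hts fun x hx y hy hxy => ?_)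
  · exact ((ht hx hy hxy.ne).resolve_right fun h => h.1.not_gt hxy).2
  · refine lt_of_le_of_ne (not_lt.1 fun h => ht hx hy hxy.ne ⟨hxy, h⟩) fun h => hxy.ne ?_
    exact hf (coe_subset.2 hts hx) (coe_subset.2 hts hy) h

theorem Prod.Lex.strictMono_of_lt_of_lt {α β γ : Type*} [Preorder α] [Preorder β] [Preorder γ]
    {f : α ×ₗ β → γ} (hf₁ : ∀ a b b', b < b' → f (toLex (a, b)) < f (toLex (a, b')))
    (hf₂ : ∀ a a' b b', a < a' → f (toLex (a, b)) < f (toLex (a', b'))) : StrictMono f := by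
  rintro ⟨a, b⟩ ⟨a', b'⟩ h
  rcases Prod.Lex.toLex_lt_toLex.1 h with h | ⟨rfl, h⟩
  exacts [hf₂ _ _ _ _ h, hf₁ _ _ _ h]

theorem strictMono_lex_mul_add {m k : ℕ} {β : Type*} [Preorder β] {g : β → ℕ} (hg : StrictMono g)
    (hgk : ∀ b, g b < k) :
    StrictMono fun p : Fin m ×ₗ β => k * ((ofLex p).1 : ℕ) + g (ofLex p).2 :=
  Prod.Lex.strictMono_of_lt_of_lt (fun a _ _ h => by simpa using hg h) fun a a' b _ h => by
    have : k * a + k ≤ k * a' := by rw [← Nat.mul_succ]; exact Nat.mul_le_mul_left k h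
    have := hgk b
    simp only [ofLex_toLex]
    omega

theorem Fin.lt_iff_toLex_divNat_modNat_lt {k : ℕ} {i j : Fin (k * k)} :
    i < j ↔ toLex (i.divNat, i.modNat) < toLex (j.divNat, j.modNat) := by
  have key (i : Fin (k * k)) : (i : ℕ) = k * (i.divNat : ℕ) + i.modNat := by
    simp [Nat.div_add_mod]
  rw [Fin.lt_def, key i, key j]
  exact (strictMono_lex_mul_add (m := k) (g := Fin.val) Fin.val_strictMono Fin.isLt).lt_iff_lt
    (a := toLex (i.divNat, i.modNat)) (b := toLex (j.divNat, j.modNat))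

theorem layeredFun_lt_iff {k : ℕ} {i j : Fin (k * k)} :
    LayeredFun k i < LayeredFun k j ↔
      toLex (i.divNat, toDual i.modNat) < toLex (j.divNat, toDual j.modNat) :=
  (strictMono_lex_mul_add (m := k) (k := k)
    (g := fun b : (Fin k)ᵒᵈ => k - 1 - ((ofDual b : Fin k) : ℕ))
    (fun b b' h => by
      have := (ofDual b).isLt
      have : ((ofDual b' : Fin k) : ℕ) < ofDual b := h
      dsimp only
      omega)
    fun b => by have := (ofDual b).isLt; omega).lt_iff_lt
    (a := toLex (i.divNat, toDual i.modNat))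
    (b := toLex (j.divNat, toDual j.modNat))

theorem colayeredFun_add_layeredFun {k : ℕ} (i : Fin (k * k)) :
    ColayeredFun k i + LayeredFun k i = k * k - 1 := by
  have hq : (i : ℕ) / k < k := Nat.div_lt_of_lt_mul i.isLt
  have hr : (i : ℕ) % k < k := Nat.mod_lt _ (Nat.zero_lt_of_lt hq)
  have hblocks : k * (k - 1 - (i : ℕ) / k) + k * ((i : ℕ) / k) = k * (k - 1) := by
    rw [← Nat.mul_add, Nat.sub_add_cancel (by omega)]
  obtain ⟨j, rfl⟩ : ∃ j, k = j + 1 := ⟨k - 1, by omega⟩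
  have hsq : (j + 1) * (j + 1) = (j + 1) * j + j + 1 := by ring
  simp only [ColayeredFun, LayeredFun, Nat.add_sub_cancel] at hblocks ⊢
  omega

section Permutation

variable {n : ℕ} (σ : Equiv.Perm (Fin n))

def SouthWest (u w : Fin n) : Prop := u < w ∧ σ u < σ w

instance : DecidableRel (SouthWest σ) := fun _ _ => instDecidableAnd

def complement : Equiv.Perm (Fin n) := σ.trans Fin.revPerm

@[simp] lemma complement_apply (x : Fin n) : complement σ x = (σ x).rev := rfl

lemma southWest_complement_iff {u w : Fin n} :
    SouthWest (complement σ) u w ↔ u < w ∧ σ w < σ u := by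
  simp [SouthWest]

variable {σ} {k : ℕ}

lemma strictMonoOn_complement_iff {t : Set (Fin n)} :
    StrictMonoOn (complement σ) t ↔ StrictAntiOn σ t := by
  simp [StrictMonoOn, StrictAntiOn]

theorem SouthWest.trans {u v w : Fin n} (huv : SouthWest σ u v) (hvw : SouthWest σ v w) :
    SouthWest σ u w :=
  ⟨huv.1.trans hvw.1, huv.2.trans hvw.2⟩

variable (σ k) in
def Separated (u w : Fin n) : Prop :=
  ∃ Z : Finset (Fin n), #Z = k ∧ StrictAntiOn σ (Z : Set (Fin n)) ∧
    ∀ z ∈ Z, SouthWest σ u z ∧ SouthWest σ z w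

theorem Separated.southWest (hk : 1 ≤ k) {u w : Fin n} (h : Separated σ k u w) :
    SouthWest σ u w := by
  obtain ⟨Z, hZ, -, hZuw⟩ := h
  obtain ⟨z, hz⟩ := card_pos.1 (hZ ▸ hk)
  exact (hZuw z hz).1.trans (hZuw z hz).2

theorem Separated.trans (hk : 1 ≤ k) {u v w : Fin n} (huv : Separated σ k u v)
    (hvw : Separated σ k v w) : Separated σ k u w := by
  obtain ⟨Z, hZ, hanti, hZuv⟩ := huv
  exact ⟨Z, hZ, hanti, fun z hz => ⟨(hZuv z hz).1, (hZuv z hz).2.trans (hvw.southWest hk)⟩⟩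

variable (σ) in
theorem containsPattern_layeredFun_of_blocks_s13 (B : Fin k → Fin k → Fin n)
    (hB : ∀ i, StrictMono (B i)) (hσB : ∀ i, StrictAnti (σ ∘ B i))
    (hsep : ∀ i j, i < j → ∀ a b, SouthWest σ (B i a) (B j b)) :
    ContainsPattern (LayeredFun k) σ := by
  have hpos : StrictMono fun p : Fin k ×ₗ Fin k => B (ofLex p).1 (ofLex p).2 :=
    Prod.Lex.strictMono_of_lt_of_lt (fun a _ _ h => hB a h) fun _ _ _ _ h => (hsep _ _ h _ _).1
  have hval :
      StrictMono fun p : Fin k ×ₗ (Fin k)ᵒᵈ => σ (B (ofLex p).1 (ofDual (ofLex p).2)) :=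
    Prod.Lex.strictMono_of_lt_of_lt (fun a _ _ h => hσB a h) fun _ _ _ _ h => (hsep _ _ h _ _).2
  refine ⟨fun i => B i.divNat i.modNat,
    fun i j hij => hpos (Fin.lt_iff_toLex_divNat_modNat_lt.1 hij), fun i j => ?_⟩
  rw [layeredFun_lt_iff]
  exact hval.lt_iff_lt.symm

theorem containsPattern_of_isChain_separated (hk : 1 ≤ k) {t : Finset (Fin n)}
    (ht : IsChain (Separated σ k) (t : Set (Fin n))) (hcard : #t = k + 1) :
    ContainsPattern (LayeredFun k) σ := by
  set g := t.orderEmbOfFin hcard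
  have hg (i j : Fin (k + 1)) (hij : i < j) : Separated σ k (g i) (g j) :=
    (ht (t.orderEmbOfFin_mem hcard i) (t.orderEmbOfFin_mem hcard j)
      (g.injective.ne hij.ne)).resolve_right fun h =>
        (h.southWest hk).1.not_gt (g.strictMono hij)
  choose Z hZcard hZanti hZ using fun i : Fin k => hg _ _ i.castSucc_lt_succ
  refine containsPattern_layeredFun_of_blocks_s13 σ (fun i => (Z i).orderEmbOfFin (hZcard i))
    (fun i => OrderEmbedding.strictMono _)
    (fun i a b hab => hZanti i (orderEmbOfFin_mem _ _ _) (orderEmbOfFin_mem _ _ _)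
      (OrderEmbedding.strictMono _ hab)) fun i j hij a b => ?_
  have h₁ := (hZ i _ (orderEmbOfFin_mem _ (hZcard i) a)).2
  have h₂ := (hZ j _ (orderEmbOfFin_mem _ (hZcard j) b)).1
  rcases (Fin.succ_le_castSucc_iff.2 hij).eq_or_lt with h | h
  · exact h₁.trans (h ▸ h₂)
  · exact (h₁.trans ((hg _ _ h).southWest hk)).trans h₂

theorem exists_height_separated (hk : 1 ≤ k) (hσ : ¬ ContainsPattern (LayeredFun k) σ) :
    ∃ h : Fin n → ℕ, (∀ x, h x ∈ Icc 1 k) ∧ ∀ u w, Separated σ k u w → h u < h w := by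
  obtain ⟨h, hrange, hstrict⟩ := exists_height_of_isChain_card_le
    (fun _ _ _ => Separated.trans hk)
    (fun x (hx : Separated σ k x x) => (hx.southWest hk).1.false) univ
    fun t _ ht => by
      by_contra! hlt
      obtain ⟨t', ht't, hcard⟩ := exists_subset_card_eq (Nat.succ_le_of_lt hlt)
      exact hσ (containsPattern_of_isChain_separated hk (ht.mono (coe_subset.2 ht't)) hcard)
  exact ⟨h, fun x => hrange x (mem_univ x), fun u w => hstrict u (mem_univ u) w (mem_univ w)⟩

theorem containsPattern_colayeredFun_of_complement
    (h : ContainsPattern (LayeredFun k) (complement σ)) : ContainsPattern (ColayeredFun k) σ := by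
  obtain ⟨f, hf, hpat⟩ := h
  refine ⟨f, hf, fun i j => ?_⟩
  have hi := colayeredFun_add_layeredFun i
  have hj := colayeredFun_add_layeredFun j
  calc ColayeredFun k i < ColayeredFun k j ↔ LayeredFun k j < LayeredFun k i := by omega
    _ ↔ σ (f i) < σ (f j) := (hpat j i).trans Fin.rev_lt_rev

end Permutation

section Rectangles

variable {n : ℕ} (σ : Equiv.Perm (Fin n))

def rectangle (u w : Fin n) : Finset (Fin n) := {z | SouthWest σ u z ∧ SouthWest σ z w}

@[simp] lemma mem_rectangle {u w z : Fin n} :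
    z ∈ rectangle σ u w ↔ SouthWest σ u z ∧ SouthWest σ z w := by
  simp [rectangle]

lemma mem_rectangles_of_extremal {l r t b z : Fin n} (hl : l < z) (hr : z < r) (hb : σ b < σ z)
    (ht : σ z < σ t) (hzt : z ≠ t) (hzb : z ≠ b) (hzl : σ z ≠ σ l) (hzr : σ z ≠ σ r) :
    z ∈ rectangle σ l t ∪ rectangle σ b r ∪ rectangle σ b t ∪
      (rectangle (complement σ) l b ∪ rectangle (complement σ) t r ∪
        rectangle (complement σ) t b) := by
  simp only [mem_union, mem_rectangle, southWest_complement_iff]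
  rcases hzt.lt_or_gt with hzt | htz
  · rcases hzl.lt_or_gt with hzl | hlz
    · rcases hzb.lt_or_gt with hzb | hbz
      · exact .inr (.inl (.inl ⟨⟨hl, hzl⟩, hzb, hb⟩))
      · exact .inl (.inr ⟨⟨hbz, hb⟩, hzt, ht⟩)
    · exact .inl (.inl (.inl ⟨⟨hl, hlz⟩, hzt, ht⟩))
  · rcases hzr.lt_or_gt with hzr | hrz
    · rcases hzb.lt_or_gt with hzb | hbz
      · exact .inr (.inr ⟨⟨htz, ht⟩, hzb, hb⟩)
      · exact .inl (.inl (.inr ⟨⟨hbz, hb⟩, hr, hzr⟩))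
    · exact .inr (.inl (.inr ⟨⟨htz, ht⟩, hr, hrz⟩))

variable {σ} {k μ : ℕ}

theorem card_rectangle_le {u w : Fin n} (huw : ¬ Separated σ k u w)
    (hμ : ∀ t : Finset (Fin n), StrictMonoOn σ (t : Set (Fin n)) → #t ≤ μ) :
    #(rectangle σ u w) ≤ (k - 1) * μ :=
  card_le_mul_of_strictAntiOn_of_strictMonoOn σ.injective.injOn
    (fun t ht hanti => by
      by_contra! hlt
      obtain ⟨Z, hZt, hZ⟩ := exists_subset_card_eq (show k ≤ #t by omega)
      exact huw ⟨Z, hZ, hanti.mono (coe_subset.2 hZt),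
        fun z hz => (mem_rectangle σ).1 (ht (hZt hz))⟩)
    fun t _ => hμ t

theorem card_le_of_forall_not_separated {C : Finset (Fin n)}
    (hC : ∀ u ∈ C, ∀ w ∈ C, ¬ Separated σ k u w ∧ ¬ Separated (complement σ) k u w)
    (hμ : ∀ t : Finset (Fin n),
      StrictMonoOn σ (t : Set (Fin n)) ∨ StrictAntiOn σ (t : Set (Fin n)) → #t ≤ μ) :
    #C ≤ 4 + 6 * ((k - 1) * μ) := by
  rcases C.eq_empty_or_nonempty with rfl | hne
  · simp
  obtain ⟨t, htC, ht⟩ := exists_max_image C σ hne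
  obtain ⟨b, hbC, hb⟩ := exists_min_image C σ hne
  have hlC := C.min'_mem hne
  have hrC := C.max'_mem hne
  set l := C.min' hne
  set r := C.max' hne
  have hR {u w : Fin n} (hu : u ∈ C) (hw : w ∈ C) : #(rectangle σ u w) ≤ (k - 1) * μ :=
    card_rectangle_le (hC u hu w hw).1 fun s hs => hμ s (.inl hs)
  have hRc {u w : Fin n} (hu : u ∈ C) (hw : w ∈ C) :
      #(rectangle (complement σ) u w) ≤ (k - 1) * μ :=
    card_rectangle_le (hC u hu w hw).2 fun s hs =>
      hμ s (.inr (strictMonoOn_complement_iff.1 hs))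
  have hcover : C ⊆ {l, t, b, r} ∪ (rectangle σ l t ∪ rectangle σ b r ∪ rectangle σ b t ∪
      (rectangle (complement σ) l b ∪ rectangle (complement σ) t r ∪
        rectangle (complement σ) t b)) := by
    intro z hz
    by_cases hext : z ∈ ({l, t, b, r} : Finset (Fin n))
    · exact mem_union_left _ hext
    simp only [mem_insert, mem_singleton, not_or] at hext
    obtain ⟨hzl, hzt, hzb, hzr⟩ := hext
    exact mem_union_right _ (mem_rectangles_of_extremal σ
      ((C.min'_le z hz).lt_of_ne' hzl) ((C.le_max' z hz).lt_of_ne hzr)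
      ((hb z hz).lt_of_ne' (σ.injective.ne hzb)) ((ht z hz).lt_of_ne (σ.injective.ne hzt))
      hzt hzb (σ.injective.ne hzl) (σ.injective.ne hzr))
  grw [card_le_card hcover, card_union_le, card_union_le, card_union_le, card_union_le,
    card_union_le, card_union_le, card_le_four, hR hlC htC, hR hbC hrC, hR hbC htC,
    hRc hlC hbC, hRc htC hrC, hRc htC hbC]
  omega

theorem card_le_of_not_containsPattern (hk : 1 ≤ k) (h₁ : ¬ ContainsPattern (LayeredFun k) σ)
    (h₂ : ¬ ContainsPattern (LayeredFun k) (complement σ))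
    (hμ : ∀ t : Finset (Fin n),
      StrictMonoOn σ (t : Set (Fin n)) ∨ StrictAntiOn σ (t : Set (Fin n)) → #t ≤ μ) :
    n ≤ (4 + 6 * ((k - 1) * μ)) * (k * k) := by
  classical
  obtain ⟨h, hh, hsep⟩ := exists_height_separated hk h₁
  obtain ⟨h', hh', hsep'⟩ := exists_height_separated hk h₂
  simpa using card_le_mul_card_image_of_maps_to (s := univ) (f := fun x => (h x, h' x))
    (fun x _ => mem_product.2 ⟨hh x, hh' x⟩) _ fun c _ =>
      card_le_of_forall_not_separated (fun u hu w hw => by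
        simp only [mem_filter, mem_univ, true_and] at hu hw
        rw [← hw, Prod.ext_iff] at hu
        exact ⟨fun hs => (hsep u w hs).ne hu.1, fun hs => (hsep' u w hs).ne hu.2⟩) hμ

end Rectangles

theorem exists_strictMono_of_strictMonoOn_or_strictAntiOn {α β : Type*} [LinearOrder α]
    [Preorder β] {g : α → β} {s : Finset α}
    (hs : StrictMonoOn g (s : Set α) ∨ StrictAntiOn g (s : Set α)) :
    ∃ f : Fin #s → α, StrictMono f ∧
      (StrictMono (fun i => g (f i)) ∨ StrictAnti (fun i => g (f i))) :=
  ⟨s.orderEmbOfFin rfl, (s.orderEmbOfFin rfl).strictMono, hs.imp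
    (fun hmono _ _ hij => hmono (orderEmbOfFin_mem _ _ _) (orderEmbOfFin_mem _ _ _)
      ((s.orderEmbOfFin rfl).strictMono hij))
    fun hanti _ _ hij => hanti (orderEmbOfFin_mem _ _ _) (orderEmbOfFin_mem _ _ _)
      ((s.orderEmbOfFin rfl).strictMono hij)⟩

/-- Every permutation of length `n` avoiding both `⊕^k(k...21)` and
`⊖^k(12...k)` contains a monotone subsequence of length at least `n/(8k³)`. -/
theorem avoiders_have_linear_monotone (n k : ℕ) (hk : 2 ≤ k)
    (π : Equiv.Perm (Fin n))
    (h₁ : ¬ ContainsPattern (LayeredFun k) π)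
    (h₂ : ¬ ContainsPattern (ColayeredFun k) π) :
    ∃ (m : ℕ) (f : Fin m → Fin n), StrictMono f ∧
      (StrictMono (fun i => π (f i)) ∨ StrictAnti (fun i => π (f i))) ∧
      (n : ℝ) / (8 * (k : ℝ) ^ 3) ≤ (m : ℝ) := by
  classical
  obtain ⟨s, hs, hmax⟩ := exists_max_image
    {t : Finset (Fin n) | StrictMonoOn π (t : Set (Fin n)) ∨ StrictAntiOn π (t : Set (Fin n))}
    card ⟨∅, by simp [StrictMonoOn]⟩
  have hμ (t : Finset (Fin n)) (ht : StrictMonoOn π (t : Set (Fin n)) ∨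
      StrictAntiOn π (t : Set (Fin n))) : #t ≤ #s :=
    hmax t (mem_filter.2 ⟨mem_univ t, ht⟩)
  have hn := card_le_of_not_containsPattern (by omega) h₁
    (fun h => h₂ (containsPattern_colayeredFun_of_complement h)) hμ
  obtain ⟨f, hf, hπf⟩ := exists_strictMono_of_strictMonoOn_or_strictAntiOn (mem_filter.1 hs).2
  refine ⟨#s, f, hf, hπf, ?_⟩
  rcases Nat.eq_zero_or_pos n with rfl | hn0
  · simp
  have hs1 : 1 ≤ #s := by
    simpa using hμ {⟨0, hn0⟩} (.inl (by simp [Set.strictMonoOn_singleton]))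
  obtain ⟨j, rfl⟩ : ∃ j, k = j + 1 := ⟨k - 1, by omega⟩
  rw [div_le_iff₀ (by positivity)]
  rw [Nat.add_sub_cancel] at hn
  exact_mod_cast (by nlinarith : n ≤ #s * (8 * (j + 1) ^ 3))
end

section
/- Let 𝒞 be a permutation class (a set of permutations closed downward under pattern containment) that does not contain all layered permutations and does not contain all colayered permutations. Then there exists a constant c > 0 such that every permutation of length n in 𝒞 contains a monotone subsequence of length at least c·n. -/
/-- `σ` is contained (as a pattern) in `π`. -/
def PermContains {m n : ℕ} (σ : Equiv.Perm (Fin m)) (π : Equiv.Perm (Fin n)) : Prop :=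
  ∃ f : Fin m → Fin n, StrictMono f ∧ ∀ i j, σ i < σ j ↔ π (f i) < π (f j)

/-- A permutation class: a set of permutations (of every length) closed
downward under pattern containment. -/
def IsPermClass (C : ∀ n : ℕ, Set (Equiv.Perm (Fin n))) : Prop :=
  ∀ (m n : ℕ) (σ : Equiv.Perm (Fin m)) (π : Equiv.Perm (Fin n)),
    π ∈ C n → PermContains σ π → σ ∈ C m

/-- `π` is layered: there is a monotone assignment of indices to blocks such
that two positions form an inversion exactly when they lie in the same block. -/
def IsLayered {n : ℕ} (π : Equiv.Perm (Fin n)) : Prop :=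
  ∃ b : Fin n → ℕ, Monotone b ∧ ∀ i j : Fin n, i < j → (π j < π i ↔ b i = b j)

/-- `π` is colayered: there is a monotone assignment of indices to blocks such
that two positions form a non-inversion exactly when they lie in the same block. -/
def IsColayered {n : ℕ} (π : Equiv.Perm (Fin n)) : Prop :=
  ∃ b : Fin n → ℕ, Monotone b ∧ ∀ i j : Fin n, i < j → (π i < π j ↔ b i = b j)

/-!
Take `K` at least the lengths of the excluded layered and colayered permutations. Then `π`
contains no direct sum of `K` decreasing runs of length `K` (a layer grid), and its complement
contains none either. The layer depth of a point is the number of grid layers that fit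
south-west of it. A decreasing run of length `K` strictly between two points of equal depth
would raise the depth of the upper point, so by Mirsky's theorem such a box holds at most
`(K - 1) m` points, `m` being the longest monotone subsequence. Peeling off an extreme point at
most three times covers a class of points with equal depths (for `π` and for its complement)
by boxes of both orientations, so each of the `K²` classes has at most `6 (K - 1) m + 5` points.
-/

open Finset OrderDual Function

namespace PermClass

variable {ι β : Type*} [LinearOrder ι] [LinearOrder β] {y : ι → β}

section Boxes

/-- For `toDual ∘ y` this says that `i` lies north-west of `j`: passing to the complement
swaps the two diagonal directions, and increasing with decreasing. -/
def SouthWest (y : ι → β) (i j : ι) : Prop := i < j ∧ y i < y j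

lemma SouthWest.trans {i j k : ι} (hij : SouthWest y i j) (hjk : SouthWest y j k) :
    SouthWest y i k :=
  ⟨hij.1.trans hjk.1, hij.2.trans hjk.2⟩

def BoxBound (y : ι → β) (S : Finset ι) (M : ℕ) : Prop :=
  ∀ u ∈ S, ∀ v ∈ S, ∀ T ⊆ S, (∀ i ∈ T, SouthWest y u i ∧ SouthWest y i v) → #T ≤ M

lemma card_le_of_subset_insert_union {s a b : Finset ι} {q : ι} (h : s ⊆ insert q (a ∪ b)) :
    #s ≤ #a + #b + 1 :=
  (card_le_card h).trans <| (card_insert_le _ _).trans <| by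
    have := card_union_le a b
    omega

variable {S : Finset ι} {M : ℕ}

lemma card_le_of_southWest_of_northWest (hy : Injective y) (h : BoxBound y S M)
    (h' : BoxBound (toDual ∘ y) S M) {T : Finset ι} (hTS : T ⊆ S) {p s : ι} (hp : p ∈ S)
    (hs : s ∈ S) (hpT : ∀ i ∈ T, SouthWest y p i) (hsT : ∀ i ∈ T, SouthWest (toDual ∘ y) s i) :
    #T ≤ 2 * M + 1 := by
  -- the rightmost point `q` of `T` closes a box with `p` below it and one with `s` above it
  rcases T.eq_empty_or_nonempty with rfl | hne
  · simp
  set q := T.max' hne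
  have hqT : q ∈ T := T.max'_mem hne
  have hcover : T ⊆ insert q ({i ∈ T | y q < y i} ∪ {i ∈ T | y i < y q}) := by
    intro i hi
    rcases lt_trichotomy (y i) (y q) with hlt | heq | hgt
    · simp [hi, hlt]
    · simp [hy heq]
    · simp [hi, hgt]
  have hleft : ∀ i ∈ T, y i ≠ y q → i < q := fun i hi hne =>
    (T.le_max' i hi).lt_of_ne (fun h => hne (congrArg y h))
  have hA : #{i ∈ T | y q < y i} ≤ M :=
    h' s hs q (hTS hqT) _ ((filter_subset _ _).trans hTS) fun i hi => by
      rw [mem_filter] at hi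
      exact ⟨hsT i hi.1, hleft i hi.1 hi.2.ne', hi.2⟩
  have hB : #{i ∈ T | y i < y q} ≤ M :=
    h p hp q (hTS hqT) _ ((filter_subset _ _).trans hTS) fun i hi => by
      rw [mem_filter] at hi
      exact ⟨hpT i hi.1, hleft i hi.1 hi.2.ne, hi.2⟩
  have := card_le_of_subset_insert_union hcover
  omega

lemma card_le_of_southWest (hy : Injective y) (h : BoxBound y S M)
    (h' : BoxBound (toDual ∘ y) S M) {T : Finset ι} (hTS : T ⊆ S) {p : ι} (hp : p ∈ S)
    (hpT : ∀ i ∈ T, SouthWest y p i) : #T ≤ 3 * M + 2 := by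
  rcases T.eq_empty_or_nonempty with rfl | hne
  · simp
  obtain ⟨s, hsT, hs⟩ := T.exists_max_image y hne
  have hcover : T ⊆ insert s ({i ∈ T | i < s} ∪ {i ∈ T | s < i}) := by
    intro i hi
    rcases lt_trichotomy i s with hlt | rfl | hgt
    · simp [hi, hlt]
    · simp
    · simp [hi, hgt]
  have hbelow : ∀ i ∈ T, i ≠ s → y i < y s := fun i hi hne =>
    (hs i hi).lt_of_ne (hy.ne hne)
  have hA : #{i ∈ T | i < s} ≤ M :=
    h p hp s (hTS hsT) _ ((filter_subset _ _).trans hTS) fun i hi => by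
      rw [mem_filter] at hi
      exact ⟨hpT i hi.1, hi.2, hbelow i hi.1 hi.2.ne⟩
  have hB : #{i ∈ T | s < i} ≤ 2 * M + 1 :=
    card_le_of_southWest_of_northWest hy h h' ((filter_subset _ _).trans hTS) hp (hTS hsT)
      (fun i hi => hpT i (mem_filter.1 hi).1) fun i hi => by
        rw [mem_filter] at hi
        exact ⟨hi.2, hbelow i hi.1 hi.2.ne'⟩
  have := card_le_of_subset_insert_union hcover
  omega

lemma card_le_of_boxBound (hy : Injective y) (h : BoxBound y S M)
    (h' : BoxBound (toDual ∘ y) S M) : #S ≤ 6 * M + 5 := by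
  rcases S.eq_empty_or_nonempty with rfl | hne
  · simp
  set p := S.min' hne
  have hpS : p ∈ S := S.min'_mem hne
  have hcover : S ⊆ insert p ({i ∈ S | y p < y i} ∪ {i ∈ S | y i < y p}) := by
    intro i hi
    rcases lt_trichotomy (y i) (y p) with hlt | heq | hgt
    · simp [hi, hlt]
    · simp [hy heq]
    · simp [hi, hgt]
  have hright : ∀ i ∈ S, y i ≠ y p → p < i := fun i hi hne =>
    (S.min'_le i hi).lt_of_ne (fun h => hne (congrArg y h.symm))
  have hA : #{i ∈ S | y p < y i} ≤ 3 * M + 2 :=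
    card_le_of_southWest hy h h' (filter_subset _ _) hpS fun i hi => by
      rw [mem_filter] at hi
      exact ⟨hright i hi.1 hi.2.ne', hi.2⟩
  have hB : #{i ∈ S | y i < y p} ≤ 3 * M + 2 :=
    card_le_of_southWest (toDual.injective.comp hy) h' h (filter_subset _ _) hpS fun i hi => by
      rw [mem_filter] at hi
      exact ⟨hright i hi.1 hi.2.ne, hi.2⟩
  have := card_le_of_subset_insert_union hcover
  omega

end Boxes

section Mirsky

variable {S : Finset ι} {m : ℕ}

lemma strictMonoOn_insert_of_southWest {T : Finset ι} {x : ι} (hT : StrictMonoOn y (T : Set ι))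
    (hx : ∀ j ∈ T, SouthWest y j x) : StrictMonoOn y (insert x T : Finset ι) := by
  rw [coe_insert, strictMonoOn_insert_iff_of_forall_le fun j hj => (hx j hj).1.le]
  exact ⟨fun j hj _ => (hx j hj).2, hT⟩

open scoped Classical in
/-- Capped at `m`: it is the true length only when `m` bounds the increasing subsets of `S`. -/
noncomputable def incLength (y : ι → β) (S : Finset ι) (m : ℕ) (x : ι) : ℕ :=
  Nat.findGreatest (fun r => ∃ T ⊆ S, StrictMonoOn y (T : Set ι) ∧
    (∀ j ∈ T, SouthWest y j x) ∧ #T = r) m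

lemma incLength_spec (x : ι) : ∃ T ⊆ S, StrictMonoOn y (T : Set ι) ∧
    (∀ j ∈ T, SouthWest y j x) ∧ #T = incLength y S m x := by
  classical
  exact Nat.findGreatest_spec (P := fun r => ∃ T ⊆ S, StrictMonoOn y (T : Set ι) ∧
    (∀ j ∈ T, SouthWest y j x) ∧ #T = r) (Nat.zero_le m)
    ⟨∅, empty_subset _, by simp [StrictMonoOn], by simp, rfl⟩

lemma exists_card_eq_incLength_add_one {x : ι} (hx : x ∈ S) :
    ∃ U ⊆ S, StrictMonoOn y (U : Set ι) ∧ (∀ j ∈ U, j ≤ x ∧ y j ≤ y x) ∧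
      #U = incLength y S m x + 1 := by
  obtain ⟨T, hTS, hT, hTx, hcard⟩ := incLength_spec (y := y) (S := S) (m := m) x
  have hxT : x ∉ T := fun h => lt_irrefl x (hTx x h).1
  refine ⟨insert x T, insert_subset hx hTS, strictMonoOn_insert_of_southWest hT hTx,
    fun j hj => ?_, by rw [card_insert_of_notMem hxT, hcard]⟩
  rcases mem_insert.1 hj with rfl | hj
  · exact ⟨le_rfl, le_rfl⟩
  · exact ⟨(hTx j hj).1.le, (hTx j hj).2.le⟩

variable (hm : ∀ T ⊆ S, StrictMonoOn y (T : Set ι) → #T ≤ m)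
include hm

lemma incLength_lt {x : ι} (hx : x ∈ S) : incLength y S m x < m := by
  obtain ⟨U, hUS, hU, -, hcard⟩ := exists_card_eq_incLength_add_one (y := y) (m := m) hx
  have := hm U hUS hU
  omega

lemma incLength_lt_incLength {x z : ι} (hx : x ∈ S) (hxz : SouthWest y x z) :
    incLength y S m x < incLength y S m z := by
  classical
  obtain ⟨U, hUS, hU, hUx, hcard⟩ := exists_card_eq_incLength_add_one (y := y) (m := m) hx
  rw [Nat.lt_iff_add_one_le, ← hcard]
  exact Nat.le_findGreatest (hm U hUS hU) ⟨U, hUS, hU, fun j hj =>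
    ⟨(hUx j hj).1.trans_lt hxz.1, (hUx j hj).2.trans_lt hxz.2⟩, rfl⟩

/-- Mirsky's theorem: the level sets of `incLength` are decreasing. -/
lemma card_le_of_forall_strictAntiOn_card_lt {K : ℕ} (hy : Injective y)
    (hK : ∀ T ⊆ S, StrictAntiOn y (T : Set ι) → #T < K) : #S ≤ (K - 1) * m := by
  have hfiber : ∀ r ∈ range m, #{x ∈ S | incLength y S m x = r} ≤ K - 1 := by
    intro r _
    have hanti : StrictAntiOn y (({x ∈ S | incLength y S m x = r} : Finset ι) : Set ι) := by
      intro a ha b hb hab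
      rw [mem_coe, mem_filter] at ha hb
      refine (le_of_not_gt fun hlt => ?_).lt_of_ne (hy.ne hab.ne')
      exact (incLength_lt_incLength hm ha.1 ⟨hab, hlt⟩).ne (ha.2.trans hb.2.symm)
    have := hK _ (filter_subset _ _) hanti
    omega
  simpa using card_le_mul_card_image_of_maps_to
    (fun x hx => mem_range.2 (incLength_lt hm hx)) (K - 1) hfiber

end Mirsky

section Grid

variable {K : ℕ}

/-- `E t` is a decreasing run of length `K` and the runs are stacked from south-west to
north-east: for `r = K` this is the layered permutation `δ_K ⊕ ⋯ ⊕ δ_K`, which contains every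
layered permutation of length at most `K`. -/
def IsLayerGrid (y : ι → β) {r K : ℕ} (E : Fin r → Fin K → ι) : Prop :=
  (∀ t, StrictMono (E t) ∧ StrictAnti (y ∘ E t)) ∧
    ∀ ⦃t t'⦄, t < t' → ∀ s s', SouthWest y (E t s) (E t' s')

lemma IsLayerGrid.snoc {r : ℕ} {E : Fin r → Fin K → ι} (hE : IsLayerGrid y E) {D : Fin K → ι}
    (hD : StrictMono D) (hyD : StrictAnti (y ∘ D)) (hED : ∀ t s s', SouthWest y (E t s) (D s')) :
    IsLayerGrid y (Fin.snoc (α := fun _ => Fin K → ι) E D) := by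
  constructor
  · intro t
    induction t using Fin.lastCases with
    | last => simpa using ⟨hD, hyD⟩
    | cast t => simpa using hE.1 t
  · intro t t' htt'
    induction t' using Fin.lastCases with
    | last =>
      obtain ⟨t, rfl⟩ := Fin.exists_castSucc_eq.2 htt'.ne
      simpa using hED t
    | cast t' =>
      obtain ⟨t, rfl⟩ := Fin.exists_castSucc_eq.2 (htt'.trans (Fin.castSucc_lt_last t')).ne
      simpa using hE.2 (Fin.castSucc_lt_castSucc_iff.1 htt')

lemma exists_strictAnti_of_le_card {K : ℕ} {T : Finset ι} (hT : StrictAntiOn y (T : Set ι))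
    (hK : K ≤ #T) : ∃ D : Fin K → ι, StrictMono D ∧ StrictAnti (y ∘ D) ∧ ∀ s, D s ∈ T := by
  have hD : StrictMono (T.orderEmbOfFin rfl ∘ Fin.castLE hK) :=
    (T.orderEmbOfFin rfl).strictMono.comp (Fin.strictMono_castLE hK)
  exact ⟨_, hD, fun a b hab => hT (T.orderEmbOfFin_mem rfl _) (T.orderEmbOfFin_mem rfl _) (hD hab),
    fun s => T.orderEmbOfFin_mem rfl _⟩

open scoped Classical in
noncomputable def layerDepth (y : ι → β) (K : ℕ) (x : ι) : ℕ :=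
  Nat.findGreatest (fun r => ∃ E : Fin r → Fin K → ι, IsLayerGrid y E ∧
    ∀ t s, SouthWest y (E t s) x) K

lemma layerDepth_spec (x : ι) : ∃ E : Fin (layerDepth y K x) → Fin K → ι, IsLayerGrid y E ∧
    ∀ t s, SouthWest y (E t s) x := by
  classical
  exact Nat.findGreatest_spec (P := fun r => ∃ E : Fin r → Fin K → ι, IsLayerGrid y E ∧
    ∀ t s, SouthWest y (E t s) x) (Nat.zero_le K)
    ⟨Fin.elim0, ⟨fun t => t.elim0, fun t => t.elim0⟩, fun t => t.elim0⟩

variable (hK : ∀ E : Fin K → Fin K → ι, ¬ IsLayerGrid y E)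
include hK

lemma layerDepth_lt (x : ι) : layerDepth y K x < K := by
  classical
  have hfull : ∀ r, r = K → (∃ E : Fin r → Fin K → ι, IsLayerGrid y E ∧
      ∀ t s, SouthWest y (E t s) x) → False := by
    rintro r rfl ⟨E, hE, -⟩
    exact hK E hE
  exact (Nat.findGreatest_le K).lt_of_ne fun h => hfull _ h (layerDepth_spec x)

lemma layerDepth_lt_layerDepth {u v : ι} {D : Fin K → ι} (hD : StrictMono D)
    (hyD : StrictAnti (y ∘ D)) (hu : ∀ s, SouthWest y u (D s)) (hv : ∀ s, SouthWest y (D s) v) :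
    layerDepth y K u < layerDepth y K v := by
  classical
  -- a grid south-west of `u`, followed by the run `D`, is a longer grid south-west of `v`
  obtain ⟨E, hE, hEu⟩ := layerDepth_spec (y := y) (K := K) u
  have hEv : ∀ t s s', SouthWest y (E t s) (D s') := fun t s s' => (hEu t s).trans (hu s')
  refine Nat.lt_iff_add_one_le.2 (Nat.le_findGreatest (layerDepth_lt hK u)
    ⟨_, hE.snoc hD hyD hEv, fun t s => ?_⟩)
  induction t using Fin.lastCases with
  | last => simpa using hv s
  | cast t => simpa using (hEv t s s).trans (hv s)

lemma boxBound_of_layerDepth_eq (hy : Injective y) {m : ℕ}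
    (hm : ∀ T : Finset ι, StrictMonoOn y (T : Set ι) → #T ≤ m) {S : Finset ι}
    (hS : ∀ u ∈ S, ∀ v ∈ S, layerDepth y K u = layerDepth y K v) :
    BoxBound y S ((K - 1) * m) := by
  intro u hu v hv T _ huv
  refine card_le_of_forall_strictAntiOn_card_lt (fun T' _ => hm T') hy fun T' hT'T hT' => ?_
  by_contra! hcard
  obtain ⟨D, hD, hyD, hDT⟩ := exists_strictAnti_of_le_card hT' hcard
  exact (layerDepth_lt_layerDepth hK hD hyD (fun s => (huv _ (hT'T (hDT s))).1)
    fun s => (huv _ (hT'T (hDT s))).2).ne (hS u hu v hv)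

end Grid

section Embedding

variable {γ : Type*} [LinearOrder γ] {K : ℕ}

lemma exists_embedding_of_isLayerGrid {N : ℕ} {σ : Fin N → γ} (hσ : Injective σ)
    {b : Fin N → ℕ} (hb : Monotone b) (hσb : ∀ i j, i < j → (σ j < σ i ↔ b i = b j))
    (hy : Injective y) (hNK : N ≤ K) {E : Fin K → Fin K → ι} (hE : IsLayerGrid y E) :
    ∃ f : Fin N → ι, StrictMono f ∧ ∀ i j, σ i < σ j ↔ y (f i) < y (f j) := by
  classical
  -- entry `i` goes to position `i` of layer `L i`, the number of entries in lower blocks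
  let L : Fin N → Fin K := fun i =>
    ⟨#{j | b j < b i}, (card_lt_univ_of_notMem (x := i) (by simp)).trans_le (by simpa using hNK)⟩
  have hL_eq : ∀ i j, b i = b j → L i = L j := fun i j h => Fin.ext (by simp [L, h])
  have hL_lt : ∀ i j, b i < b j → L i < L j := fun i j h => by
    refine Fin.mk_lt_mk.2 (card_lt_card ⟨fun k hk => ?_, fun hsub => ?_⟩)
    · simp only [mem_filter, mem_univ, true_and] at hk ⊢
      exact hk.trans h
    · exact absurd (hsub (by simpa using h)) (by simp)
  let f : Fin N → ι := fun i => E (L i) (Fin.castLE hNK i)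
  have hpair : ∀ i j, i < j → f i < f j ∧ (σ i < σ j ↔ y (f i) < y (f j)) := by
    intro i j hij
    have hcast : Fin.castLE hNK i < Fin.castLE hNK j := Fin.strictMono_castLE hNK hij
    rcases (hb hij.le).eq_or_lt with hbij | hbij
    · have hfi : f i = E (L j) (Fin.castLE hNK i) := by simp only [f, hL_eq i j hbij]
      rw [hfi]
      exact ⟨(hE.1 _).1 hcast,
        iff_of_false ((hσb i j hij).2 hbij).asymm ((hE.1 _).2 hcast).asymm⟩
    · have hsw := hE.2 (hL_lt i j hbij) (Fin.castLE hNK i) (Fin.castLE hNK j)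
      refine ⟨hsw.1, iff_of_true ?_ hsw.2⟩
      exact (le_of_not_gt fun h => hbij.ne ((hσb i j hij).1 h)).lt_of_ne (hσ.ne hij.ne)
  refine ⟨f, fun i j hij => (hpair i j hij).1, fun i j => ?_⟩
  rcases lt_trichotomy i j with hij | rfl | hji
  · exact (hpair i j hij).2
  · simp
  · have hσ' : σ i < σ j ↔ ¬ σ j < σ i :=
      ⟨lt_asymm, fun h => (not_lt.1 h).lt_of_ne (hσ.ne hji.ne')⟩
    have hy' : y (f i) < y (f j) ↔ ¬ y (f j) < y (f i) :=
      ⟨lt_asymm, fun h => (not_lt.1 h).lt_of_ne (hy.ne (hpair j i hji).1.ne')⟩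
    exact hσ'.trans ((not_congr (hpair j i hji).2).trans hy'.symm)

lemma _root_.IsLayered.permContains_of_isLayerGrid {n N : ℕ} {π : Equiv.Perm (Fin n)}
    {τ : Equiv.Perm (Fin N)} (hτ : IsLayered τ) (hNK : N ≤ K) {E : Fin K → Fin K → Fin n}
    (hE : IsLayerGrid π E) : PermContains τ π := by
  obtain ⟨b, hb, hτb⟩ := hτ
  exact exists_embedding_of_isLayerGrid τ.injective hb hτb π.injective hNK hE

lemma _root_.IsColayered.permContains_of_isLayerGrid {n N : ℕ} {π : Equiv.Perm (Fin n)}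
    {μ : Equiv.Perm (Fin N)} (hμ : IsColayered μ) (hNK : N ≤ K) {E : Fin K → Fin K → Fin n}
    (hE : IsLayerGrid (toDual ∘ π) E) : PermContains μ π := by
  obtain ⟨b, hb, hμb⟩ := hμ
  obtain ⟨f, hf, hμf⟩ := exists_embedding_of_isLayerGrid (σ := toDual ∘ μ)
    (toDual.injective.comp μ.injective) hb hμb (toDual.injective.comp π.injective) hNK hE
  exact ⟨f, hf, fun i j => by simpa using hμf j i⟩

end Embedding

theorem exists_monotone_of_not_isLayerGrid [Fintype ι] {K : ℕ} (hy : Injective y)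
    (hK : ∀ E : Fin K → Fin K → ι, ¬ IsLayerGrid y E)
    (hK' : ∀ E : Fin K → Fin K → ι, ¬ IsLayerGrid (toDual ∘ y) E) :
    ∃ T : Finset ι, (StrictMonoOn y (T : Set ι) ∨ StrictAntiOn y (T : Set ι)) ∧
      Fintype.card ι ≤ 6 * K ^ 3 * #T := by
  classical
  obtain ⟨T, hT, hTmax⟩ := exists_max_image
    ((univ : Finset ι).powerset.filter fun T : Finset ι =>
      StrictMonoOn y (T : Set ι) ∨ StrictAntiOn y (T : Set ι)) card
    ⟨∅, by simp [StrictMonoOn]⟩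
  refine ⟨T, (mem_filter.1 hT).2, ?_⟩
  have hm : ∀ T' : Finset ι, StrictMonoOn y (T' : Set ι) → #T' ≤ #T := fun T' h =>
    hTmax T' (by simp [h])
  have hm' : ∀ T' : Finset ι, StrictMonoOn (toDual ∘ y) (T' : Set ι) → #T' ≤ #T := fun T' h =>
    hTmax T' (by simp [strictMonoOn_toDual_comp_iff.1 h])
  let depths : ι → ℕ × ℕ := fun x => (layerDepth y K x, layerDepth (toDual ∘ y) K x)
  have hfiber : ∀ d ∈ range K ×ˢ range K, #{x | depths x = d} ≤ 6 * ((K - 1) * #T) + 5 := by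
    intro d _
    have hS : ∀ u ∈ ({x | depths x = d} : Finset ι), ∀ v ∈ ({x | depths x = d} : Finset ι),
        depths u = depths v := by
      simp only [mem_filter, mem_univ, true_and]
      rintro u rfl v hv
      exact hv.symm
    exact card_le_of_boxBound hy
      (boxBound_of_layerDepth_eq hK hy hm fun u hu v hv => congrArg Prod.fst (hS u hu v hv))
      (boxBound_of_layerDepth_eq hK' (toDual.injective.comp hy) hm' fun u hu v hv =>
        congrArg Prod.snd (hS u hu v hv))
  have hcard := card_le_mul_card_image_of_maps_to (s := univ)
    (fun x _ => mem_product.2 ⟨mem_range.2 (layerDepth_lt hK x), mem_range.2 (layerDepth_lt hK' x)⟩)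
    _ hfiber
  rw [card_univ, card_product, card_range] at hcard
  rcases isEmpty_or_nonempty ι with hι | ⟨⟨x⟩⟩
  · simp
  have hT1 : 1 ≤ #T := hm {x} (by simp)
  rcases K with _ | k
  · simpa using hcard
  · simp only [add_tsub_cancel_right] at hcard
    nlinarith

end PermClass

open PermClass

/-- **Main theorem.** If a permutation class does not contain all layered
permutations and does not contain all colayered permutations, then there is a
constant `c > 0` such that every member of length `n` contains a monotone
subsequence of length at least `c·n`. -/
theorem perm_class_linear_monotone (C : ∀ n : ℕ, Set (Equiv.Perm (Fin n)))
    (hC : IsPermClass C)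
    (hlay : ∃ (n : ℕ) (π : Equiv.Perm (Fin n)), IsLayered π ∧ π ∉ C n)
    (hcolay : ∃ (n : ℕ) (π : Equiv.Perm (Fin n)), IsColayered π ∧ π ∉ C n) :
    ∃ c : ℝ, 0 < c ∧ ∀ (n : ℕ) (π : Equiv.Perm (Fin n)), π ∈ C n →
      ∃ (m : ℕ) (f : Fin m → Fin n), StrictMono f ∧
        (StrictMono (fun i => π (f i)) ∨ StrictAnti (fun i => π (f i))) ∧
        c * (n : ℝ) ≤ (m : ℝ) := by
  obtain ⟨N₁, τ, hτ, hτC⟩ := hlay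
  obtain ⟨N₂, μ, hμ, hμC⟩ := hcolay
  set K := N₁ + N₂ + 1
  refine ⟨(6 * K ^ 3 : ℝ)⁻¹, by positivity, fun n π hπ => ?_⟩
  have hgrid : ∀ E : Fin K → Fin K → Fin n, ¬ IsLayerGrid π E := fun E hE =>
    hτC (hC _ _ τ π hπ (hτ.permContains_of_isLayerGrid (by omega) hE))
  have hgrid' : ∀ E : Fin K → Fin K → Fin n, ¬ IsLayerGrid (toDual ∘ π) E := fun E hE =>
    hμC (hC _ _ μ π hπ (hμ.permContains_of_isLayerGrid (by omega) hE))
  obtain ⟨T, hT, hcard⟩ := exists_monotone_of_not_isLayerGrid π.injective hgrid hgrid'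
  let f := T.orderEmbOfFin rfl
  have hfT : ∀ i, f i ∈ T := T.orderEmbOfFin_mem rfl
  refine ⟨#T, f, f.strictMono, ?_, ?_⟩
  · exact hT.imp (fun h i j hij => h (hfT i) (hfT j) (f.strictMono hij))
      fun h i j hij => h (hfT i) (hfT j) (f.strictMono hij)
  · rw [inv_mul_le_iff₀ (by positivity)]
    exact_mod_cast (by simpa using hcard)
end

section
/- If a permutation class can be expressed as the merge of finitely many monotone classes, then it does not contain all layered permutations and does not contain all colayered permutations. -/
/-!
A merge of `m` monotone permutations of length `n` has a monotone subsequence of length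
greater than `k` as soon as `m * k < n`, by pigeonhole on the pieces. The layered permutation
`⊕^k (k ⋯ 2 1)` has length `k²`, yet an increasing subsequence meets each layer at most once and
a decreasing one stays inside a single layer, so it has no monotone subsequence longer than `k`;
taking `k = m + 1` it is not such a merge. Its complement is colayered and has the same monotone
subsequences up to swapping increasing and decreasing ones.
-/

open Finset

section MonotoneSubsequences

variable {α β γ : Type*} [LinearOrder α] [LinearOrder β] [LinearOrder γ]

def MonotoneSubseqBounded (f : α → β) (k : ℕ) : Prop :=
  ∀ s : Finset α, StrictMonoOn f s ∨ StrictAntiOn f s → #s ≤ k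

theorem MonotoneSubseqBounded.comp_strictAnti {f : α → β} {g : β → γ} {k : ℕ}
    (hf : MonotoneSubseqBounded f k) (hg : StrictAnti g) : MonotoneSubseqBounded (g ∘ f) k := by
  rintro s (hmono | hanti)
  · exact hf s (.inr fun a ha b hb hab => hg.lt_iff_gt.mp (hmono ha hb hab))
  · exact hf s (.inl fun a ha b hb hab => hg.lt_iff_gt.mp (hanti ha hb hab))

theorem MonotoneSubseqBounded.not_exists_merge [Fintype α] {f : α → β} {k : ℕ} (m : ℕ)
    (hf : MonotoneSubseqBounded f k) (hcard : m * k < Fintype.card α) :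
    ¬ ∃ P : α → Fin m, ∀ c : Fin m,
      (∀ i j, P i = c → P j = c → i < j → f i < f j) ∨
      (∀ i j, P i = c → P j = c → i < j → f j < f i) := by
  rintro ⟨P, hP⟩
  obtain ⟨c, hc⟩ := Fintype.exists_lt_card_fiber_of_mul_lt_card (f := P) (by simpa using hcard)
  refine hc.not_ge (hf _ ?_)
  simp only [coe_filter, mem_univ, true_and]
  rcases hP c with hmono | hanti
  · exact .inl fun i hi j hj => hmono i j hi hj
  · exact .inr fun i hi j hj => hanti i j hi hj

end MonotoneSubsequences

theorem IsLayered.isColayered_trans_revPerm {n : ℕ} {π : Equiv.Perm (Fin n)} (hπ : IsLayered π) :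
    IsColayered (π.trans Fin.revPerm) := by
  obtain ⟨b, hb, hπb⟩ := hπ
  exact ⟨b, hb, fun i j hij => by simpa using hπb i j hij⟩

section Layered

variable {α β γ : Type*} [LinearOrder α] [Preorder β] {π : α → β} {b : α → γ}

theorem injOn_of_strictMonoOn_of_layered (hπb : ∀ i j, i < j → (π j < π i ↔ b i = b j))
    {s : Set α} (hs : StrictMonoOn π s) : s.InjOn b := by
  intro i hi j hj hij
  by_contra hne
  rcases lt_or_gt_of_ne hne with h | h
  · exact (hs hi hj h).not_gt ((hπb i j h).mpr hij)
  · exact (hs hj hi h).not_gt ((hπb j i h).mpr hij.symm)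

theorem eq_of_strictAntiOn_of_layered (hπb : ∀ i j, i < j → (π j < π i ↔ b i = b j))
    {s : Set α} (hs : StrictAntiOn π s) {i j : α} (hi : i ∈ s) (hj : j ∈ s) : b i = b j := by
  rcases lt_trichotomy i j with h | rfl | h
  · exact (hπb i j h).mp (hs hi hj h)
  · rfl
  · exact ((hπb j i h).mp (hs hj hi h)).symm

end Layered

def revSnd (α : Type*) (k : ℕ) : Equiv.Perm (α ×ₗ Fin k) :=
  (ofLex.trans ((Equiv.refl α).prodCongr Fin.revPerm)).trans toLex

@[simp]
theorem ofLex_revSnd {α : Type*} {k : ℕ} (p : α ×ₗ Fin k) :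
    ofLex (revSnd α k p) = ((ofLex p).1, (ofLex p).2.rev) :=
  rfl

theorem revSnd_lt_revSnd_iff {α : Type*} [LinearOrder α] {k : ℕ} {p q : α ×ₗ Fin k} (h : p < q) :
    revSnd α k q < revSnd α k p ↔ (ofLex p).1 = (ofLex q).1 := by
  rw [Prod.Lex.lt_iff] at h ⊢
  simp only [ofLex_revSnd, Fin.rev_lt_rev]
  grind

noncomputable def lexEquiv (k : ℕ) : Fin (k * k) ≃o Fin k ×ₗ Fin k :=
  Fintype.orderIsoFinOfCardEq (Fin k ×ₗ Fin k) (by simp)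

/-- The layered permutation `⊕^k (k ⋯ 2 1)`: reversing the second coordinate of
`Fin k ×ₗ Fin k` reverses each of the `k` layers. -/
noncomputable def layeredPerm (k : ℕ) : Equiv.Perm (Fin (k * k)) :=
  (lexEquiv k).symm.toEquiv.permCongr (revSnd (Fin k) k)

theorem layeredPerm_lt_layeredPerm_iff {k : ℕ} {i j : Fin (k * k)} (h : i < j) :
    layeredPerm k j < layeredPerm k i ↔ (ofLex (lexEquiv k i)).1 = (ofLex (lexEquiv k j)).1 :=
  (lexEquiv k).symm.lt_iff_lt.trans (revSnd_lt_revSnd_iff ((lexEquiv k).lt_iff_lt.mpr h))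

theorem isLayered_layeredPerm (k : ℕ) : IsLayered (layeredPerm k) :=
  ⟨fun i => (ofLex (lexEquiv k i)).1,
    fun _ _ h => Prod.Lex.monotone_fst_ofLex ((lexEquiv k).monotone h),
    fun _ _ h => (layeredPerm_lt_layeredPerm_iff h).trans Fin.val_inj.symm⟩

theorem monotoneSubseqBounded_layeredPerm (k : ℕ) : MonotoneSubseqBounded (layeredPerm k) k := by
  have hspec := fun i j (h : i < j) => layeredPerm_lt_layeredPerm_iff (k := k) h
  rintro s (hmono | hanti)
  · simpa using card_le_card_of_injOn _ (fun _ _ => mem_univ _)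
      (injOn_of_strictMonoOn_of_layered hspec hmono)
  · have hinj : Set.InjOn (fun i => (ofLex (lexEquiv k i)).2) s := fun i hi j hj hij =>
      (lexEquiv k).injective (Prod.ext (eq_of_strictAntiOn_of_layered hspec hanti hi hj) hij)
    simpa using card_le_card_of_injOn _ (fun _ _ => mem_univ _) hinj

theorem merge_class_misses_layered_general (C : ∀ n : ℕ, Set (Equiv.Perm (Fin n)))
    (m : ℕ)
    (hmerge : ∀ (n : ℕ) (π : Equiv.Perm (Fin n)), π ∈ C n →
      ∃ P : Fin n → Fin m,
        ∀ c : Fin m,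
          (∀ i j : Fin n, P i = c → P j = c → i < j → π i < π j) ∨
          (∀ i j : Fin n, P i = c → P j = c → i < j → π j < π i)) :
    (∃ (n : ℕ) (π : Equiv.Perm (Fin n)), IsLayered π ∧ π ∉ C n) ∧
    (∃ (n : ℕ) (π : Equiv.Perm (Fin n)), IsColayered π ∧ π ∉ C n) := by
  have hcard : m * (m + 1) < Fintype.card (Fin ((m + 1) * (m + 1))) := by
    simp only [Fintype.card_fin]; nlinarith
  have hbound := monotoneSubseqBounded_layeredPerm (m + 1)
  refine ⟨⟨_, layeredPerm (m + 1), isLayered_layeredPerm _, fun hmem => ?_⟩,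
    ⟨_, (layeredPerm (m + 1)).trans Fin.revPerm,
      (isLayered_layeredPerm _).isColayered_trans_revPerm, fun hmem => ?_⟩⟩
  · exact hbound.not_exists_merge m hcard (hmerge _ _ hmem)
  · exact (hbound.comp_strictAnti Fin.rev_strictAnti).not_exists_merge m hcard (hmerge _ _ hmem)

/-- If every member of a permutation class is the merge of at most `m`
monotone permutations (for a fixed finite `m`), then the class does not
contain all layered permutations and does not contain all colayered
permutations. -/
theorem merge_class_misses_layered (C : ∀ n : ℕ, Set (Equiv.Perm (Fin n)))
    (hC : IsPermClass C) (m : ℕ)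
    (hmerge : ∀ (n : ℕ) (π : Equiv.Perm (Fin n)), π ∈ C n →
      ∃ P : Fin n → Fin m,
        ∀ c : Fin m,
          (∀ i j : Fin n, P i = c → P j = c → i < j → π i < π j) ∨
          (∀ i j : Fin n, P i = c → P j = c → i < j → π j < π i)) :
    (∃ (n : ℕ) (π : Equiv.Perm (Fin n)), IsLayered π ∧ π ∉ C n) ∧
    (∃ (n : ℕ) (π : Equiv.Perm (Fin n)), IsColayered π ∧ π ∉ C n) :=
  merge_class_misses_layered_general C m hmerge
end
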